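/- Let c be a volatile configuration of the complete graph K_n with c(v) ≤ n−1 for every vertex v. Then there exists an ordering v₁, v₂, …, v_n of the vertices such that c(v_i) ≥ n−i for every i ∈ {1,…,n}. -/

import Mathlib

/-- Firing vertex `v` in `K_n`: remove `n-1` chips from `v`, add one chip to each other vertex. -/
def fireK (n : ℕ) (c : Fin n → ℕ) (v : Fin n) : Fin n → ℕ :=
  fun u => if u = v then c v - (n - 1) else c u + 1

/-- Configuration after firing `f 0, …, f (m-1)` in order in `K_n`. -/
def fireIterK (n : ℕ) (c : Fin n → ℕ) (f : ℕ → Fin n) : ℕ → Fin n → ℕ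
  | 0 => c
  | m + 1 => fireK n (fireIterK n c f m) (f m)

/-- A configuration of `K_n` is volatile if it admits an infinite legal firing sequence. -/
def VolatileK (n : ℕ) (c : Fin n → ℕ) : Prop :=
  ∃ f : ℕ → Fin n, ∀ m : ℕ, n - 1 ≤ fireIterK n c f m (f m)

/-- Configuration after firing a finite list of vertices in order in `K_n`. -/
def fireListK (n : ℕ) : (Fin n → ℕ) → List (Fin n) → (Fin n → ℕ)
  | c, [] => c
  | c, v :: l => fireListK n (fireK n c v) l

/-- A finite firing list in `K_n` is legal if each fired vertex has at least `n-1` chips. -/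
def LegalListK (n : ℕ) : (Fin n → ℕ) → List (Fin n) → Prop
  | _, [] => True
  | c, v :: l => n - 1 ≤ c v ∧ LegalListK n (fireK n c v) l

/-!
In a legal firing sequence `f` from a configuration with `c v ≤ n - 1`, the first `n` firings
are pairwise distinct, so `i ↦ f i` orders the vertices. The vertex `f i` has not fired before
time `i`, so it then holds `c (f i) + i` chips, and legality gives `c (f i) + i ≥ n - 1`.
-/

section LegalSequence

variable {n : ℕ} {c : Fin n → ℕ} {f : ℕ → Fin n}

lemma fireIterK_succ_self (m : ℕ) :
    fireIterK n c f (m + 1) (f m) = fireIterK n c f m (f m) - (n - 1) := by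
  simp [fireIterK, fireK]

lemma fireIterK_add_of_forall_ne {u : Fin n} {t : ℕ} :
    ∀ {d : ℕ}, (∀ s, t ≤ s → s < t + d → f s ≠ u) →
      fireIterK n c f (t + d) u = fireIterK n c f t u + d
  | 0, _ => rfl
  | d + 1, h => by
    have hne : u ≠ f (t + d) := (h (t + d) (by omega) (by omega)).symm
    have ih := fireIterK_add_of_forall_ne (d := d) fun s hs hs' => h s hs (by omega)
    simp [fireIterK, fireK, hne, ih, add_assoc]

lemma fireIterK_eq_add_of_forall_ne {u : Fin n} {m : ℕ} (h : ∀ s < m, f s ≠ u) :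
    fireIterK n c f m u = c u + m := by
  simpa [fireIterK] using
    fireIterK_add_of_forall_ne (c := c) (t := 0) (d := m) fun s _ hs => h s (by omega)

/-- A vertex firing for the first time at `s₁` holds `c u + s₁ ≥ n - 1` chips and is left with
`c u + s₁ - (n - 1) ≤ s₁` of them, so it needs `n - 1 - s₁` more idle steps before firing again. -/
lemma le_of_fire_twice (hc : ∀ v, c v ≤ n - 1) (hleg : ∀ m, n - 1 ≤ fireIterK n c f m (f m))
    {s₁ s₂ : ℕ} (hinj : Set.InjOn f (Set.Iio s₂)) (hs : s₁ < s₂)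
    (heq : f s₁ = f s₂) : n ≤ s₂ := by
  have hfirst : fireIterK n c f s₁ (f s₁) = c (f s₁) + s₁ :=
    fireIterK_eq_add_of_forall_ne fun s hs' he =>
      hs'.ne (hinj (show s < s₂ by omega) (show s₁ < s₂ from hs) he)
  have hidle : fireIterK n c f (s₁ + 1 + (s₂ - (s₁ + 1))) (f s₁) =
      fireIterK n c f (s₁ + 1) (f s₁) + (s₂ - (s₁ + 1)) :=
    fireIterK_add_of_forall_ne fun s hs' hs'' he =>
      (show s₁ < s by omega).ne (hinj hs (show s < s₂ by omega) he.symm)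
  rw [show s₁ + 1 + (s₂ - (s₁ + 1)) = s₂ by omega, fireIterK_succ_self] at hidle
  have h₁ := hleg s₁
  have h₂ := hleg s₂
  rw [← heq] at h₂
  have := hc (f s₁)
  omega

lemma injOn_Iio_of_legal (hc : ∀ v, c v ≤ n - 1)
    (hleg : ∀ m, n - 1 ≤ fireIterK n c f m (f m)) : Set.InjOn f (Set.Iio n) := by
  suffices ∀ m ≤ n, Set.InjOn f (Set.Iio m) from this n le_rfl
  intro m
  induction m with
  | zero => simp
  | succ m ih =>
    intro hm a ha b hb hab
    have hinj := ih (by omega)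
    simp only [Set.mem_Iio, Nat.lt_succ_iff_lt_or_eq] at ha hb
    rcases ha with ha | rfl <;> rcases hb with hb | rfl
    · exact hinj ha hb hab
    · exact absurd (le_of_fire_twice hc hleg hinj ha hab) (by omega)
    · exact absurd (le_of_fire_twice hc hleg hinj hb hab.symm) (by omega)
    · rfl

end LegalSequence

/-- If `c` is a volatile configuration of `K_n` with `c(v) ≤ n-1` for all `v`,
then there is an ordering `v₁,…,v_n` of the vertices with `c(v_i) ≥ n - i`
(0-indexed: `c (σ i) ≥ n - 1 - i`). -/
theorem stmt4 (n : ℕ) (c : Fin n → ℕ) (hc : ∀ v, c v ≤ n - 1) (hvol : VolatileK n c) :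
    ∃ σ : Equiv.Perm (Fin n), ∀ i : Fin n, n - 1 - (i : ℕ) ≤ c (σ i) := by
  obtain ⟨f, hleg⟩ := hvol
  have hinj : Set.InjOn f (Set.Iio n) := injOn_Iio_of_legal hc hleg
  have hσ : Function.Injective fun i : Fin n => f i := fun i j h =>
    Fin.ext (hinj i.isLt j.isLt h)
  refine ⟨Equiv.ofBijective _ (Finite.injective_iff_bijective.mp hσ), fun i => ?_⟩
  have hcount : fireIterK n c f i (f i) = c (f i) + i :=
    fireIterK_eq_add_of_forall_ne fun s hs he => hs.ne (hinj (hs.trans i.isLt) i.isLt he)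
  have := hleg i
  simp only [Equiv.ofBijective_apply]
  omega
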